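/- Expressive power of MoC (Theorem 1): Let FFN(W_gate, W_up, W_down)(x) = (SiLU(x W_gate) ⊙ (x W_up)) W_down be a standard gated FFN from ℝ^d to ℝ^d with hidden dimension d_ffn, and let MoC_{a:b} be the same map with a grouped Top-K operator (keeping, in every block of b consecutive hidden channels, the a channels with largest absolute SiLU value) inserted after the SiLU nonlinearity. Then for all a ≤ b and all d_ffn, every function realizable by a standard FFN with hidden dimension d_ffn is realizable by a MoC_{a:b} model with hidden dimension d_moc = b·⌈d_ffn/a⌉. -/
import Mathlib


noncomputable def SiLU (x : ℝ) : ℝ := x / (1 + Real.exp (-x))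

lemma SiLU_zero : SiLU 0 = 0 := by simp [SiLU]

/-- Expressive power of MoC: every function realizable by a standard gated FFN
with hidden dimension `dffn` is realizable by a MoC_{a:b} model with hidden
dimension `d_moc = b * ⌈dffn / a⌉`, regardless of how ties in the grouped
Top-K selection (top-`a` absolute SiLU values in each block of `b` channels)
are broken. Hidden channels are indexed by `Fin (⌈dffn/a⌉) × Fin b`, the first
component being the block index. -/
theorem moc_expressive_power
    (d dffn a b : ℕ) (ha : 0 < a) (hab : a ≤ b)
    (Wg Wu : Fin d → Fin dffn → ℝ) (Wd : Fin dffn → Fin d → ℝ) :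
    ∃ (Wg' Wu' : Fin d → (Fin ((dffn + a - 1) / a) × Fin b) → ℝ)
      (Wd' : (Fin ((dffn + a - 1) / a) × Fin b) → Fin d → ℝ),
      ∀ (x : Fin d → ℝ) (S : Fin ((dffn + a - 1) / a) → Finset (Fin b)),
        (∀ k, (S k).card = a) →
        (∀ k, ∀ j ∈ S k, ∀ l ∉ S k,
          |SiLU (∑ t, x t * Wg' t (k, l))| ≤ |SiLU (∑ t, x t * Wg' t (k, j))|) →
        ∀ o : Fin d,
          (∑ c : Fin ((dffn + a - 1) / a) × Fin b,
              ((if c.2 ∈ S c.1 then SiLU (∑ t, x t * Wg' t c) else 0) *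
                (∑ t, x t * Wu' t c)) * Wd' c o)
            =
          ∑ j : Fin dffn,
              (SiLU (∑ t, x t * Wg t j) * (∑ t, x t * Wu t j)) * Wd j o := by
  classical
  set m := (dffn + a - 1) / a with hm
  have hdm : dffn ≤ a * m := by
    rcases Nat.lt_or_ge (a * m) dffn with h | h
    · exfalso
      have h2 : (m + 1) * a ≤ dffn + a - 1 := by
        have h3 : (m + 1) * a = a * m + a := by ring
        obtain ⟨P, hP⟩ : ∃ P, a * m = P := ⟨_, rfl⟩
        rw [h3, hP]; rw [hP] at h; omega
      have h4 : m + 1 ≤ (dffn + a - 1) / a := (Nat.le_div_iff_mul_le ha).mpr h2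
      omega
    · exact h
  have hlt : ∀ j : Fin dffn, (j : ℕ) / a < m := by
    intro j
    exact (Nat.div_lt_iff_lt_mul ha).mpr (lt_of_lt_of_le j.isLt (hdm.trans (le_of_eq (mul_comm a m))))
  have hjj : ∀ j : Fin dffn, ((j : ℕ) / a) * a + (j : ℕ) % a = (j : ℕ) := by
    intro j; rw [mul_comm]; exact Nat.div_add_mod _ _
  refine ⟨fun t c => if h : (c.2 : ℕ) < a ∧ (c.1 : ℕ) * a + (c.2 : ℕ) < dffn
            then Wg t ⟨(c.1 : ℕ) * a + (c.2 : ℕ), h.2⟩ else 0,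
          fun t c => if h : (c.2 : ℕ) < a ∧ (c.1 : ℕ) * a + (c.2 : ℕ) < dffn
            then Wu t ⟨(c.1 : ℕ) * a + (c.2 : ℕ), h.2⟩ else 0,
          fun c o => if h : (c.2 : ℕ) < a ∧ (c.1 : ℕ) * a + (c.2 : ℕ) < dffn
            then Wd ⟨(c.1 : ℕ) * a + (c.2 : ℕ), h.2⟩ o else 0, ?_⟩
  intro x S hcard htop o
  simp only at htop ⊢
  set cond : Fin m × Fin b → Prop := fun c => (c.2 : ℕ) < a ∧ (c.1 : ℕ) * a + (c.2 : ℕ) < dffn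
    with hcond
  set enc : Fin dffn → Fin m × Fin b := fun j =>
    (⟨(j : ℕ) / a, hlt j⟩, ⟨(j : ℕ) % a, lt_of_lt_of_le (Nat.mod_lt _ ha) hab⟩) with henc
  have hcenc : ∀ j : Fin dffn, cond (enc j) := by
    intro j
    refine ⟨Nat.mod_lt _ ha, ?_⟩
    show ((j : ℕ) / a) * a + (j : ℕ) % a < dffn
    rw [hjj j]; exact j.isLt
  have hvalenc : ∀ j : Fin dffn, ((enc j).1 : ℕ) * a + ((enc j).2 : ℕ) = (j : ℕ) := by
    intro j; exact hjj j
  have hdecenc : ∀ (c : Fin m × Fin b) (hc : cond c),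
      enc ⟨(c.1 : ℕ) * a + (c.2 : ℕ), hc.2⟩ = c := by
    intro c hc
    have h1 : ((c.1 : ℕ) * a + (c.2 : ℕ)) / a = (c.1 : ℕ) := by
      rw [mul_comm, Nat.mul_add_div ha, Nat.div_eq_of_lt hc.1, Nat.add_zero]
    have h2 : ((c.1 : ℕ) * a + (c.2 : ℕ)) % a = (c.2 : ℕ) := by
      rw [mul_comm, Nat.mul_add_mod, Nat.mod_eq_of_lt hc.1]
    ext
    · exact h1
    · exact h2
  -- the gate pre-activation as a function
  set G : Fin m × Fin b → ℝ := fun c => ∑ t, x t *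
      (if h : cond c then Wg t ⟨(c.1 : ℕ) * a + (c.2 : ℕ), h.2⟩ else 0) with hG
  have hG0 : ∀ c, ¬ cond c → G c = 0 := by
    intro c hc
    simp [hG, hc]
  have hGenc : ∀ j : Fin dffn, G (enc j) = ∑ t, x t * Wg t j := by
    intro j
    apply Finset.sum_congr rfl
    intro t _
    rw [dif_pos (hcenc j)]
    congr 1
    exact congrArg (Wg t) (Fin.ext (hvalenc j))
  -- key selection lemma
  have hsel : ∀ j : Fin dffn, (enc j).2 ∉ S (enc j).1 → SiLU (∑ t, x t * Wg t j) = 0 := by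
    intro j hns
    by_contra hne
    have hpos : 0 < |SiLU (∑ t, x t * Wg t j)| := abs_pos.mpr hne
    have hSa : ∀ s ∈ S (enc j).1, (s : ℕ) < a := by
      intro s hs
      by_contra hsa
      have hnc : ¬ cond ((enc j).1, s) := fun hc => hsa hc.1
      have h0 : G ((enc j).1, s) = 0 := hG0 _ hnc
      have hle := htop (enc j).1 s hs (enc j).2 hns
      have hle' : |SiLU (G ((enc j).1, (enc j).2))| ≤ |SiLU (G ((enc j).1, s))| := hle
      rw [h0] at hle'
      have : G ((enc j).1, (enc j).2) = G (enc j) := by rfl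
      rw [this, hGenc j, SiLU_zero, abs_zero] at hle'
      exact absurd (lt_of_lt_of_le hpos hle') (lt_irrefl 0)
    have hsub : insert (enc j).2 (S (enc j).1) ⊆
        Finset.univ.filter (fun s : Fin b => (s : ℕ) < a) := by
      intro s hs
      rcases Finset.mem_insert.mp hs with h | h
      · subst h
        exact Finset.mem_filter.mpr ⟨Finset.mem_univ _, Nat.mod_lt _ ha⟩
      · exact Finset.mem_filter.mpr ⟨Finset.mem_univ _, hSa s h⟩
    have hcard1 : (insert (enc j).2 (S (enc j).1)).card = a + 1 := by
      rw [Finset.card_insert_of_notMem hns, hcard]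
    have hcard2 : (Finset.univ.filter (fun s : Fin b => (s : ℕ) < a)).card ≤ a := by
      have hsub2 : Finset.univ.filter (fun s : Fin b => (s : ℕ) < a) ⊆
          Finset.univ.image (Fin.castLE hab) := by
        intro s hs
        have hs' := (Finset.mem_filter.mp hs).2
        exact Finset.mem_image.mpr ⟨⟨(s : ℕ), hs'⟩, Finset.mem_univ _, by ext; rfl⟩
      calc (Finset.univ.filter (fun s : Fin b => (s : ℕ) < a)).card
          ≤ (Finset.univ.image (Fin.castLE hab)).card := Finset.card_le_card hsub2
        _ ≤ (Finset.univ : Finset (Fin a)).card := Finset.card_image_le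
        _ = a := by simp
    have := Finset.card_le_card hsub
    omega
  -- the u-vector
  set U : Fin m × Fin b → ℝ := fun c => ∑ t, x t *
      (if h : cond c then Wu t ⟨(c.1 : ℕ) * a + (c.2 : ℕ), h.2⟩ else 0) with hU
  have hU0 : ∀ c, ¬ cond c → U c = 0 := by
    intro c hc; simp [hU, hc]
  -- rewrite the LHS dropping the selection "if"
  have hstep1 : (∑ c : Fin m × Fin b,
        ((if c.2 ∈ S c.1 then SiLU (G c) else 0) * U c) *
          (if h : cond c then Wd ⟨(c.1 : ℕ) * a + (c.2 : ℕ), h.2⟩ o else 0))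
      = ∑ c : Fin m × Fin b,
        (SiLU (G c) * U c) *
          (if h : cond c then Wd ⟨(c.1 : ℕ) * a + (c.2 : ℕ), h.2⟩ o else 0) := by
    apply Finset.sum_congr rfl
    intro c _
    by_cases hSc : c.2 ∈ S c.1
    · rw [if_pos hSc]
    · rw [if_neg hSc]
      by_cases hc : cond c
      · have hj : enc ⟨(c.1 : ℕ) * a + (c.2 : ℕ), hc.2⟩ = c := hdecenc c hc
        have h0 : SiLU (∑ t, x t * Wg t ⟨(c.1 : ℕ) * a + (c.2 : ℕ), hc.2⟩) = 0 := by
          apply hsel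
          rw [hj]; exact hSc
        have hGc : G c = ∑ t, x t * Wg t ⟨(c.1 : ℕ) * a + (c.2 : ℕ), hc.2⟩ := by
          apply Finset.sum_congr rfl
          intro t _
          rw [dif_pos hc]
        rw [hGc, h0]
      · rw [hU0 c hc]
        ring
  rw [hstep1]
  -- now sum over the used channels only
  have hstep2 : (∑ c : Fin m × Fin b,
        (SiLU (G c) * U c) *
          (if h : cond c then Wd ⟨(c.1 : ℕ) * a + (c.2 : ℕ), h.2⟩ o else 0))
      = ∑ c ∈ Finset.univ.filter cond,
        (SiLU (G c) * U c) *
          (if h : cond c then Wd ⟨(c.1 : ℕ) * a + (c.2 : ℕ), h.2⟩ o else 0) := by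
    symm
    apply Finset.sum_filter_of_ne
    intro c _ hne
    by_contra hc
    rw [dif_neg hc] at hne
    exact hne (mul_zero _)
  rw [hstep2]
  apply Finset.sum_bij (i := fun c hc => (⟨(c.1 : ℕ) * a + (c.2 : ℕ),
      ((Finset.mem_filter.mp hc).2).2⟩ : Fin dffn))
  · intro c hc; exact Finset.mem_univ _
  · intro c hc c' hc' heq
    have h1 := (Finset.mem_filter.mp hc).2
    have h2 := (Finset.mem_filter.mp hc').2
    have := congrArg enc heq
    rwa [hdecenc c h1, hdecenc c' h2] at this
  · intro j _
    refine ⟨enc j, Finset.mem_filter.mpr ⟨Finset.mem_univ _, hcenc j⟩, ?_⟩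
    exact Fin.ext (hvalenc j)
  · intro c hc
    have h1 := (Finset.mem_filter.mp hc).2
    have hj : enc ⟨(c.1 : ℕ) * a + (c.2 : ℕ), h1.2⟩ = c := hdecenc c h1
    rw [dif_pos h1]
    have hGc : G c = ∑ t, x t * Wg t ⟨(c.1 : ℕ) * a + (c.2 : ℕ), h1.2⟩ := by
      apply Finset.sum_congr rfl
      intro t _
      rw [dif_pos h1]
    have hUc : U c = ∑ t, x t * Wu t ⟨(c.1 : ℕ) * a + (c.2 : ℕ), h1.2⟩ := by
      rw [hU]
      apply Finset.sum_congr rfl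
      intro t _
      rw [dif_pos h1]
    rw [hGc, hUc]
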